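/- arXiv:2206.07178 — 2 statements merged into one kernel-verified Lean document; each statement's English description precedes it below -/
import Mathlib

section
/- The Hamacher scalar multiplication of interval valued q-rung orthopair fuzzy numbers preserves the q-rung constraint: for every real parameter φ > 0, real exponent ϑ > 0, and real numbers x, y ∈ [0,1] with x + y ≤ 1, one has f_{φ,ϑ}(x) + g_{φ,ϑ}(y) ≤ 1, where f_{φ,ϑ}(x) = ((1+(φ−1)x)^ϑ − (1−x)^ϑ)/((1+(φ−1)x)^ϑ + (φ−1)(1−x)^ϑ) and g_{φ,ϑ}(y) = φ·y^ϑ/((1+(φ−1)(1−y))^ϑ + (φ−1)y^ϑ). -/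
/-!
The non-membership function is dual to the membership one, `g(y) = 1 - f(1 - y)`, and `g` is
increasing on `[0, 1]`. Since `y ≤ 1 - x`, this gives `f(x) + g(y) = 1 - g(1 - x) + g(y) ≤ 1`.
Monotonicity of `g` reduces, after clearing denominators and raising to the power `ϑ`, to the
inequality `y * (1 + (φ - 1) * (1 - y')) ≤ y' * (1 + (φ - 1) * (1 - y))`, which is just
`φ * y ≤ φ * y'`.
-/

/-- Hamacher scalar-multiplication membership function with parameters `φ` and `ϑ`. -/
noncomputable def hamacherScalarMem (φ ϑ x : ℝ) : ℝ :=
  ((1 + (φ - 1) * x) ^ ϑ - (1 - x) ^ ϑ) /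
    ((1 + (φ - 1) * x) ^ ϑ + (φ - 1) * (1 - x) ^ ϑ)

/-- Hamacher scalar-multiplication non-membership function with parameters `φ` and `ϑ`. -/
noncomputable def hamacherScalarNonMem (φ ϑ y : ℝ) : ℝ :=
  φ * y ^ ϑ / ((1 + (φ - 1) * (1 - y)) ^ ϑ + (φ - 1) * y ^ ϑ)

open Set

variable {φ ϑ : ℝ}

lemma one_add_sub_one_mul_pos (hφ : 0 < φ) {t : ℝ} (ht : t ∈ Icc (0 : ℝ) 1) :
    0 < 1 + (φ - 1) * t := by
  obtain ⟨ht0, ht1⟩ := ht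
  rcases le_total φ 1 with h | h
  · nlinarith [mul_nonneg (sub_nonneg.2 ht1) (sub_nonneg.2 h)]
  · nlinarith [mul_nonneg (sub_nonneg.2 h) ht0]

lemma hamacherScalarNonMem_denom_pos (hφ : 0 < φ) (hϑ : 0 ≤ ϑ) {y : ℝ}
    (hy : y ∈ Icc (0 : ℝ) 1) :
    0 < (1 + (φ - 1) * (1 - y)) ^ ϑ + (φ - 1) * y ^ ϑ := by
  obtain ⟨hy0, hy1⟩ := hy
  have hB : 0 < 1 + (φ - 1) * (1 - y) := one_add_sub_one_mul_pos hφ ⟨by linarith, by linarith⟩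
  have hBpow : 0 < (1 + (φ - 1) * (1 - y)) ^ ϑ := Real.rpow_pos_of_pos hB ϑ
  -- `1 + (φ - 1) * (1 - y) - y = φ * (1 - y)`
  have hyB : y ^ ϑ ≤ (1 + (φ - 1) * (1 - y)) ^ ϑ :=
    Real.rpow_le_rpow hy0 (by nlinarith [mul_nonneg hφ.le (sub_nonneg.2 hy1)]) hϑ
  have hypow : 0 ≤ y ^ ϑ := Real.rpow_nonneg hy0 ϑ
  rcases le_total 1 φ with h | h
  · nlinarith [mul_nonneg (sub_nonneg.2 h) hypow]
  · nlinarith [mul_nonneg (sub_nonneg.2 h) (sub_nonneg.2 hyB)]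

lemma hamacherScalarMem_eq_one_sub_nonMem (hφ : 0 < φ) (hϑ : 0 ≤ ϑ) {x : ℝ}
    (hx : x ∈ Icc (0 : ℝ) 1) :
    hamacherScalarMem φ ϑ x = 1 - hamacherScalarNonMem φ ϑ (1 - x) := by
  have hD := hamacherScalarNonMem_denom_pos hφ hϑ (y := 1 - x) ⟨by linarith [hx.2], by linarith [hx.1]⟩
  rw [sub_sub_cancel] at hD
  unfold hamacherScalarMem hamacherScalarNonMem
  rw [sub_sub_cancel]
  field_simp
  ring

lemma hamacherScalarNonMem_monotoneOn (hφ : 0 < φ) (hϑ : 0 ≤ ϑ) :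
    MonotoneOn (hamacherScalarNonMem φ ϑ) (Icc 0 1) := by
  intro y hy y' hy' hyy'
  have hB := one_add_sub_one_mul_pos hφ (t := 1 - y) ⟨by linarith [hy.2], by linarith [hy.1]⟩
  have hB' := one_add_sub_one_mul_pos hφ (t := 1 - y') ⟨by linarith [hy'.2], by linarith [hy'.1]⟩
  have hcross : y * (1 + (φ - 1) * (1 - y')) ≤ y' * (1 + (φ - 1) * (1 - y)) := by
    nlinarith [mul_le_mul_of_nonneg_left hyy' hφ.le]
  have hcross_pow :
      y ^ ϑ * (1 + (φ - 1) * (1 - y')) ^ ϑ ≤ y' ^ ϑ * (1 + (φ - 1) * (1 - y)) ^ ϑ := by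
    rw [← Real.mul_rpow hy.1 hB'.le, ← Real.mul_rpow hy'.1 hB.le]
    exact Real.rpow_le_rpow (mul_nonneg hy.1 hB'.le) hcross hϑ
  unfold hamacherScalarNonMem
  rw [div_le_div_iff₀ (hamacherScalarNonMem_denom_pos hφ hϑ hy)
    (hamacherScalarNonMem_denom_pos hφ hϑ hy')]
  nlinarith [mul_le_mul_of_nonneg_left hcross_pow hφ.le]

theorem hamacherScalar_preserves_qrung (φ ϑ x y : ℝ) (hφ : 0 < φ) (hϑ : 0 < ϑ)
    (hx : x ∈ Set.Icc (0:ℝ) 1) (hy : y ∈ Set.Icc (0:ℝ) 1) (hxy : x + y ≤ 1) :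
    hamacherScalarMem φ ϑ x + hamacherScalarNonMem φ ϑ y ≤ 1 := by
  have hmono : hamacherScalarNonMem φ ϑ y ≤ hamacherScalarNonMem φ ϑ (1 - x) :=
    hamacherScalarNonMem_monotoneOn hφ hϑ.le hy ⟨by linarith [hx.2], by linarith [hx.1]⟩
      (by linarith)
  rw [hamacherScalarMem_eq_one_sub_nonMem hφ hϑ.le hx]
  linarith
end

section
/- The membership component of the interval valued q-rung orthopair fuzzy Hamacher–Heronian aggregation operator is monotone in each input: for real parameters φ > 0 and x, y ≥ 0 not both zero, every natural number n ≥ 1, and the composite function M(m_1,…,m_n) = f_{φ,1/(x+y)}( T-fold over all pairs 1 ≤ i ≤ j ≤ n of g_{φ,2/(n(n+1))}( S_φ( f_{φ,x}(m_i), f_{φ,y}(m_j) ) ) ) — where the T-fold denotes combining the n(n+1)/2 terms successively with the Hamacher product T_φ, and where f_{φ,0} and g_{φ,0} with zero exponent in case x = 0 or y = 0 are interpreted as the constant functions 0 and 1 respectively — if m_k, m'_k ∈ [0,1] for all k and m_k ≤ m'_k for all k, then M(m_1,…,m_n) ≤ M(m'_1,…,m'_n). -/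
/-- Hamacher sum (Hamacher t-conorm) with parameter `φ`. -/
noncomputable def hamacherSum (φ a b : ℝ) : ℝ :=
  (a + b - a * b - (1 - φ) * a * b) / (1 - (1 - φ) * a * b)

/-- Hamacher product (Hamacher t-norm) with parameter `φ`. -/
noncomputable def hamacherProd (φ a b : ℝ) : ℝ :=
  a * b / (φ + (1 - φ) * (a + b - a * b))

/-- Hamacher power membership function `g_{φ,ϑ}`.  Note that for zero exponent
`ϑ = 0` it is the constant function `1` (since `t ^ (0:ℝ) = 1`). -/
noncomputable def hamacherPowerMem (φ ϑ y : ℝ) : ℝ :=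
  φ * y ^ ϑ / ((1 + (φ - 1) * (1 - y)) ^ ϑ + (φ - 1) * y ^ ϑ)

/-- The list of all pairs `(i, j)` with `i ≤ j` of indices in `Fin n`. -/
def ivqPairs (n : ℕ) : List (Fin n × Fin n) :=
  (List.finRange n).flatMap fun i =>
    ((List.finRange n).filter fun j => decide (i ≤ j)).map fun j => (i, j)

/-- The membership component of the IVq-ROF Hamacher–Heronian mean operator:
`M(m₁,…,mₙ) = f_{φ,1/(x+y)}` applied to the `T_φ`-fold, over all pairs
`1 ≤ i ≤ j ≤ n`, of `g_{φ,2/(n(n+1))}(S_φ(f_{φ,x}(mᵢ), f_{φ,y}(mⱼ)))`, where the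
successive combination by the Hamacher product `T_φ` starts from its identity `1`. -/
noncomputable def ivqHeronianMem (φ x y : ℝ) (n : ℕ) (m : Fin n → ℝ) : ℝ :=
  hamacherScalarMem φ (1 / (x + y))
    ((ivqPairs n).foldr
      (fun p acc =>
        hamacherProd φ
          (hamacherPowerMem φ (2 / ((n : ℝ) * ((n : ℝ) + 1)))
            (hamacherSum φ (hamacherScalarMem φ x (m p.1))
              (hamacherScalarMem φ y (m p.2))))
          acc)
      1)

/-!
Both membership functions factor through the Sugeno negation `N(r) = (1 - r) / (1 + (φ - 1) r)`:
on `[0,1]`, `f_{φ,ϑ} = N ∘ (·)^ϑ ∘ N` and `g_{φ,ϑ}(y) = 1 - f_{φ,ϑ}(1 - y)`, while the Hamacher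
sum is dual to the Hamacher product, `S_φ(a,b) = 1 - T_φ(1 - a, 1 - b)`. Since `N` is an antitone
self-map of `[0,1]`, `f` and `g` are monotone self-maps of `[0,1]`; `T_φ`, hence `S_φ`, is monotone
in each argument on `[0,1]`, and monotonicity passes through the composite `M`.
-/

open Real Set

noncomputable def sugenoNeg (c r : ℝ) : ℝ := (1 - r) / (1 + c * r)

section SugenoNeg

variable {c : ℝ}

lemma sugenoNeg_denom_pos (hc : -1 < c) {r : ℝ} (hr : r ∈ Icc (0 : ℝ) 1) : 0 < 1 + c * r := by
  rcases le_or_gt 0 c with hc0 | hc0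
  · nlinarith [mul_nonneg hc0 hr.1]
  · nlinarith [mul_le_mul_of_nonpos_left hr.2 hc0.le]

lemma mapsTo_sugenoNeg (hc : -1 < c) : MapsTo (sugenoNeg c) (Icc 0 1) (Icc 0 1) := by
  intro r hr
  have hD := sugenoNeg_denom_pos hc hr
  refine ⟨div_nonneg (by linarith [hr.2]) hD.le, (div_le_one hD).2 ?_⟩
  nlinarith [hr.1]

lemma antitoneOn_sugenoNeg (hc : -1 < c) : AntitoneOn (sugenoNeg c) (Icc 0 1) := by
  intro r hr s hs hrs
  rw [sugenoNeg, sugenoNeg, div_le_div_iff₀ (sugenoNeg_denom_pos hc hs) (sugenoNeg_denom_pos hc hr)]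
  nlinarith

lemma sugenoNeg_div (c : ℝ) {p : ℝ} (q : ℝ) (hp : p ≠ 0) :
    sugenoNeg c (q / p) = (p - q) / (p + c * q) := by
  have hD : 1 + c * (q / p) = (p + c * q) / p := by field_simp
  rw [sugenoNeg, one_sub_div hp, hD, div_div_div_cancel_right₀ hp]

lemma one_sub_sugenoNeg {r : ℝ} (hr : 1 + c * r ≠ 0) :
    1 - sugenoNeg c r = (1 + c) * r / (1 + c * r) := by
  rw [sugenoNeg, one_sub_div hr]
  ring_nf

end SugenoNeg

lemma mapsTo_rpow_Icc {ϑ : ℝ} (hϑ : 0 ≤ ϑ) :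
    MapsTo (fun r : ℝ => r ^ ϑ) (Icc 0 1) (Icc 0 1) :=
  fun _ hr => ⟨rpow_nonneg hr.1 ϑ, rpow_le_one hr.1 hr.2 hϑ⟩

section Hamacher

variable {φ : ℝ}

lemma hamacherScalarMem_eq_sugenoNeg (hφ : 0 < φ) (ϑ : ℝ) {t : ℝ} (ht : t ∈ Icc (0 : ℝ) 1) :
    hamacherScalarMem φ ϑ t = sugenoNeg (φ - 1) (sugenoNeg (φ - 1) t ^ ϑ) := by
  have hA : 0 < 1 + (φ - 1) * t := sugenoNeg_denom_pos (by linarith) ht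
  have hpow : sugenoNeg (φ - 1) t ^ ϑ = (1 - t) ^ ϑ / (1 + (φ - 1) * t) ^ ϑ :=
    div_rpow (by linarith [ht.2]) hA.le ϑ
  rw [hpow, sugenoNeg_div _ _ (rpow_pos_of_pos hA ϑ).ne']
  rfl

lemma mapsTo_hamacherScalarMem (hφ : 0 < φ) {ϑ : ℝ} (hϑ : 0 ≤ ϑ) :
    MapsTo (hamacherScalarMem φ ϑ) (Icc 0 1) (Icc 0 1) := by
  have hc : -1 < φ - 1 := by linarith
  exact ((mapsTo_sugenoNeg hc).comp ((mapsTo_rpow_Icc hϑ).comp (mapsTo_sugenoNeg hc))).congr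
    fun t ht => (hamacherScalarMem_eq_sugenoNeg hφ ϑ ht).symm

lemma monotoneOn_hamacherScalarMem (hφ : 0 < φ) {ϑ : ℝ} (hϑ : 0 ≤ ϑ) :
    MonotoneOn (hamacherScalarMem φ ϑ) (Icc 0 1) := by
  have hc : -1 < φ - 1 := by linarith
  have hinner : AntitoneOn (fun t => sugenoNeg (φ - 1) t ^ ϑ) (Icc 0 1) :=
    ((monotoneOn_rpow_Ici_of_exponent_nonneg hϑ).comp_AntitoneOn (antitoneOn_sugenoNeg hc)
      fun _ hr => (mapsTo_sugenoNeg hc hr).1)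
  exact ((antitoneOn_sugenoNeg hc).comp hinner
    ((mapsTo_rpow_Icc hϑ).comp (mapsTo_sugenoNeg hc))).congr
    fun t ht => (hamacherScalarMem_eq_sugenoNeg hφ ϑ ht).symm

lemma hamacherPowerMem_eq_one_sub (hφ : 0 < φ) {ϑ : ℝ} (hϑ : 0 ≤ ϑ) {y : ℝ}
    (hy : y ∈ Icc (0 : ℝ) 1) :
    hamacherPowerMem φ ϑ y = 1 - hamacherScalarMem φ ϑ (1 - y) := by
  have hc : -1 < φ - 1 := by linarith
  have h1y : 1 - y ∈ Icc (0 : ℝ) 1 := Icc.mem_iff_one_sub_mem.1 hy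
  have hC : 0 < 1 + (φ - 1) * (1 - y) := sugenoNeg_denom_pos hc h1y
  have hr : sugenoNeg (φ - 1) (1 - y) ^ ϑ ∈ Icc (0 : ℝ) 1 :=
    mapsTo_rpow_Icc hϑ (mapsTo_sugenoNeg hc h1y)
  have hpow : sugenoNeg (φ - 1) (1 - y) ^ ϑ = y ^ ϑ / (1 + (φ - 1) * (1 - y)) ^ ϑ := by
    rw [sugenoNeg, sub_sub_cancel, div_rpow hy.1 hC.le]
  rw [hamacherScalarMem_eq_sugenoNeg hφ ϑ h1y, one_sub_sugenoNeg (sugenoNeg_denom_pos hc hr).ne',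
    hpow, hamacherPowerMem]
  have hp := (rpow_pos_of_pos hC ϑ).ne'
  field_simp
  ring

lemma mapsTo_hamacherPowerMem (hφ : 0 < φ) {ϑ : ℝ} (hϑ : 0 ≤ ϑ) :
    MapsTo (hamacherPowerMem φ ϑ) (Icc 0 1) (Icc 0 1) := by
  intro y hy
  rw [hamacherPowerMem_eq_one_sub hφ hϑ hy]
  exact Icc.mem_iff_one_sub_mem.1
    (mapsTo_hamacherScalarMem hφ hϑ (Icc.mem_iff_one_sub_mem.1 hy))

lemma monotoneOn_hamacherPowerMem (hφ : 0 < φ) {ϑ : ℝ} (hϑ : 0 ≤ ϑ) :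
    MonotoneOn (hamacherPowerMem φ ϑ) (Icc 0 1) := by
  intro a ha b hb hab
  rw [hamacherPowerMem_eq_one_sub hφ hϑ ha, hamacherPowerMem_eq_one_sub hφ hϑ hb]
  have := monotoneOn_hamacherScalarMem hφ hϑ (Icc.mem_iff_one_sub_mem.1 hb)
    (Icc.mem_iff_one_sub_mem.1 ha) (sub_le_sub_left hab 1)
  linarith

variable {a b a' b' : ℝ}

lemma hamacherProd_denom_pos (hφ : 0 < φ) (ha : a ∈ Icc (0 : ℝ) 1) (hb : b ∈ Icc (0 : ℝ) 1) :
    0 < φ + (1 - φ) * (a + b - a * b) := by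
  have hw0 : 0 ≤ a + b - a * b := by nlinarith [mul_nonneg (sub_nonneg.2 ha.2) hb.1, ha.1]
  have hw1 : a + b - a * b ≤ 1 := by nlinarith [mul_nonneg (sub_nonneg.2 ha.2) (sub_nonneg.2 hb.2)]
  rcases le_or_gt φ 1 with hφ1 | hφ1 <;> nlinarith

lemma hamacherProd_mem_Icc (hφ : 0 < φ) (ha : a ∈ Icc (0 : ℝ) 1) (hb : b ∈ Icc (0 : ℝ) 1) :
    hamacherProd φ a b ∈ Icc (0 : ℝ) 1 := by
  have hD := hamacherProd_denom_pos hφ ha hb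
  refine ⟨div_nonneg (mul_nonneg ha.1 hb.1) hD.le, (div_le_one hD).2 ?_⟩
  nlinarith [mul_nonneg (mul_nonneg hφ.le (sub_nonneg.2 ha.2)) (sub_nonneg.2 hb.2),
    mul_nonneg ha.1 (sub_nonneg.2 hb.2), mul_nonneg hb.1 (sub_nonneg.2 ha.2)]

lemma hamacherProd_comm (φ a b : ℝ) : hamacherProd φ a b = hamacherProd φ b a := by
  unfold hamacherProd
  ring_nf

lemma hamacherProd_le_hamacherProd_left (hφ : 0 < φ) (ha : a ∈ Icc (0 : ℝ) 1)
    (ha' : a' ∈ Icc (0 : ℝ) 1) (hb : b ∈ Icc (0 : ℝ) 1) (haa' : a ≤ a') :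
    hamacherProd φ a b ≤ hamacherProd φ a' b := by
  rw [hamacherProd, hamacherProd,
    div_le_div_iff₀ (hamacherProd_denom_pos hφ ha hb) (hamacherProd_denom_pos hφ ha' hb)]
  have hk : 0 ≤ φ + (1 - φ) * b := by nlinarith [mul_nonneg hφ.le (sub_nonneg.2 hb.2), hb.1]
  nlinarith [mul_nonneg (mul_nonneg hb.1 (sub_nonneg.2 haa')) hk]

lemma hamacherProd_le_hamacherProd (hφ : 0 < φ) (ha : a ∈ Icc (0 : ℝ) 1)
    (ha' : a' ∈ Icc (0 : ℝ) 1) (hb : b ∈ Icc (0 : ℝ) 1) (hb' : b' ∈ Icc (0 : ℝ) 1)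
    (haa' : a ≤ a') (hbb' : b ≤ b') :
    hamacherProd φ a b ≤ hamacherProd φ a' b' :=
  calc hamacherProd φ a b ≤ hamacherProd φ a' b :=
        hamacherProd_le_hamacherProd_left hφ ha ha' hb haa'
    _ = hamacherProd φ b a' := hamacherProd_comm φ a' b
    _ ≤ hamacherProd φ b' a' := hamacherProd_le_hamacherProd_left hφ hb hb' ha' hbb'
    _ = hamacherProd φ a' b' := hamacherProd_comm φ b' a'

lemma hamacherSum_eq_one_sub_hamacherProd (hφ : 0 < φ) (ha : a ∈ Icc (0 : ℝ) 1)
    (hb : b ∈ Icc (0 : ℝ) 1) :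
    hamacherSum φ a b = 1 - hamacherProd φ (1 - a) (1 - b) := by
  have hD := hamacherProd_denom_pos hφ (Icc.mem_iff_one_sub_mem.1 ha)
    (Icc.mem_iff_one_sub_mem.1 hb)
  have hD' : φ + (1 - φ) * ((1 - a) + (1 - b) - (1 - a) * (1 - b)) = 1 - (1 - φ) * a * b := by
    ring
  rw [hD'] at hD
  rw [hamacherSum, hamacherProd, hD', one_sub_div hD.ne']
  ring_nf

lemma hamacherSum_mem_Icc (hφ : 0 < φ) (ha : a ∈ Icc (0 : ℝ) 1) (hb : b ∈ Icc (0 : ℝ) 1) :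
    hamacherSum φ a b ∈ Icc (0 : ℝ) 1 := by
  rw [hamacherSum_eq_one_sub_hamacherProd hφ ha hb]
  exact Icc.mem_iff_one_sub_mem.1 (hamacherProd_mem_Icc hφ (Icc.mem_iff_one_sub_mem.1 ha)
    (Icc.mem_iff_one_sub_mem.1 hb))

lemma hamacherSum_le_hamacherSum (hφ : 0 < φ) (ha : a ∈ Icc (0 : ℝ) 1)
    (ha' : a' ∈ Icc (0 : ℝ) 1) (hb : b ∈ Icc (0 : ℝ) 1) (hb' : b' ∈ Icc (0 : ℝ) 1)
    (haa' : a ≤ a') (hbb' : b ≤ b') :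
    hamacherSum φ a b ≤ hamacherSum φ a' b' := by
  rw [hamacherSum_eq_one_sub_hamacherProd hφ ha hb, hamacherSum_eq_one_sub_hamacherProd hφ ha' hb']
  have := hamacherProd_le_hamacherProd hφ (Icc.mem_iff_one_sub_mem.1 ha')
    (Icc.mem_iff_one_sub_mem.1 ha) (Icc.mem_iff_one_sub_mem.1 hb') (Icc.mem_iff_one_sub_mem.1 hb)
    (sub_le_sub_left haa' 1) (sub_le_sub_left hbb' 1)
  linarith

variable {x y ϑ : ℝ}

lemma hamacherPowerMem_hamacherSum_mem_Icc (hφ : 0 < φ) (hx : 0 ≤ x) (hy : 0 ≤ y)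
    (hϑ : 0 ≤ ϑ) (ha : a ∈ Icc (0 : ℝ) 1) (hb : b ∈ Icc (0 : ℝ) 1) :
    hamacherPowerMem φ ϑ (hamacherSum φ (hamacherScalarMem φ x a) (hamacherScalarMem φ y b)) ∈
      Icc (0 : ℝ) 1 :=
  mapsTo_hamacherPowerMem hφ hϑ <| hamacherSum_mem_Icc hφ
    (mapsTo_hamacherScalarMem hφ hx ha) (mapsTo_hamacherScalarMem hφ hy hb)

lemma hamacherPowerMem_hamacherSum_le (hφ : 0 < φ) (hx : 0 ≤ x) (hy : 0 ≤ y) (hϑ : 0 ≤ ϑ)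
    (ha : a ∈ Icc (0 : ℝ) 1) (ha' : a' ∈ Icc (0 : ℝ) 1)
    (hb : b ∈ Icc (0 : ℝ) 1) (hb' : b' ∈ Icc (0 : ℝ) 1) (haa' : a ≤ a') (hbb' : b ≤ b') :
    hamacherPowerMem φ ϑ (hamacherSum φ (hamacherScalarMem φ x a) (hamacherScalarMem φ y b)) ≤
      hamacherPowerMem φ ϑ
        (hamacherSum φ (hamacherScalarMem φ x a') (hamacherScalarMem φ y b')) :=
  monotoneOn_hamacherPowerMem hφ hϑ
    (hamacherSum_mem_Icc hφ (mapsTo_hamacherScalarMem hφ hx ha) (mapsTo_hamacherScalarMem hφ hy hb))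
    (hamacherSum_mem_Icc hφ (mapsTo_hamacherScalarMem hφ hx ha')
      (mapsTo_hamacherScalarMem hφ hy hb')) <|
    hamacherSum_le_hamacherSum hφ (mapsTo_hamacherScalarMem hφ hx ha)
      (mapsTo_hamacherScalarMem hφ hx ha') (mapsTo_hamacherScalarMem hφ hy hb)
      (mapsTo_hamacherScalarMem hφ hy hb')
      (monotoneOn_hamacherScalarMem hφ hx ha ha' haa')
      (monotoneOn_hamacherScalarMem hφ hy hb hb' hbb')

lemma foldr_hamacherProd_mem_Icc {α : Type*} (hφ : 0 < φ) {t : α → ℝ}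
    (ht : ∀ i, t i ∈ Icc (0 : ℝ) 1) (l : List α) :
    l.foldr (fun i acc => hamacherProd φ (t i) acc) 1 ∈ Icc (0 : ℝ) 1 := by
  induction l with
  | nil => exact right_mem_Icc.2 zero_le_one
  | cons i l ih => exact hamacherProd_mem_Icc hφ (ht i) ih

lemma foldr_hamacherProd_le_foldr {α : Type*} (hφ : 0 < φ) {t t' : α → ℝ}
    (ht : ∀ i, t i ∈ Icc (0 : ℝ) 1) (ht' : ∀ i, t' i ∈ Icc (0 : ℝ) 1) (htt' : ∀ i, t i ≤ t' i)
    (l : List α) :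
    l.foldr (fun i acc => hamacherProd φ (t i) acc) 1 ≤
      l.foldr (fun i acc => hamacherProd φ (t' i) acc) 1 := by
  induction l with
  | nil => exact le_rfl
  | cons i l ih =>
    exact hamacherProd_le_hamacherProd hφ (ht i) (ht' i) (foldr_hamacherProd_mem_Icc hφ ht l)
      (foldr_hamacherProd_mem_Icc hφ ht' l) (htt' i) ih

end Hamacher

theorem ivqHeronianMem_monotone_general (φ x y : ℝ) (hφ : 0 < φ) (hx : 0 ≤ x) (hy : 0 ≤ y)
    (n : ℕ) (m m' : Fin n → ℝ)
    (hm : ∀ k, m k ∈ Set.Icc (0:ℝ) 1) (hm' : ∀ k, m' k ∈ Set.Icc (0:ℝ) 1)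
    (hle : ∀ k, m k ≤ m' k) :
    ivqHeronianMem φ x y n m ≤ ivqHeronianMem φ x y n m' := by
  have hϑ : (0 : ℝ) ≤ 2 / ((n : ℝ) * ((n : ℝ) + 1)) := by positivity
  have hterm_mem (μ : Fin n → ℝ) (hμ : ∀ k, μ k ∈ Icc (0 : ℝ) 1) (p : Fin n × Fin n) :=
    hamacherPowerMem_hamacherSum_mem_Icc hφ hx hy hϑ (hμ p.1) (hμ p.2)
  have hterm_le (p : Fin n × Fin n) :=
    hamacherPowerMem_hamacherSum_le hφ hx hy hϑ (hm p.1) (hm' p.1) (hm p.2) (hm' p.2)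
      (hle p.1) (hle p.2)
  exact monotoneOn_hamacherScalarMem hφ (by positivity)
    (foldr_hamacherProd_mem_Icc hφ (hterm_mem m hm) (ivqPairs n))
    (foldr_hamacherProd_mem_Icc hφ (hterm_mem m' hm') (ivqPairs n))
    (foldr_hamacherProd_le_foldr hφ (hterm_mem m hm) (hterm_mem m' hm') hterm_le (ivqPairs n))

theorem ivqHeronianMem_monotone (φ x y : ℝ) (hφ : 0 < φ) (hx : 0 ≤ x) (hy : 0 ≤ y)
    (hxy : ¬(x = 0 ∧ y = 0)) (n : ℕ) (hn : 1 ≤ n) (m m' : Fin n → ℝ)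
    (hm : ∀ k, m k ∈ Set.Icc (0:ℝ) 1) (hm' : ∀ k, m' k ∈ Set.Icc (0:ℝ) 1)
    (hle : ∀ k, m k ≤ m' k) :
    ivqHeronianMem φ x y n m ≤ ivqHeronianMem φ x y n m' :=
  ivqHeronianMem_monotone_general φ x y hφ hx hy n m m' hm hm' hle
end
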